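/- If u(x) = w e^{-i k·x} is a complex-vector-valued plane wave on Minkowski space (w a constant complex vector, k a constant real covector) whose exterior derivative du satisfies *du = i·du, then du ≠ 0 forces k to be null (k·k = 0) and w·k related so that the curvature R_{κλμν} = Re((du)_{κλ}(du)_{μν}) satisfies the vacuum condition R^κ{}_{λκν} = 0 (Ricci flatness). -/

import Mathlib

open scoped BigOperators

/-- Minkowski metric `diag(1,-1,-1,-1)` (equal to its inverse). -/
def eta (i j : Fin 4) : ℝ := if i = j then (if i = 0 then 1 else -1) else 0

/-- Totally antisymmetric symbol with `ε_{0123} = 1`, complex valued. -/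
noncomputable def epsC (a b c d : Fin 4) : ℂ :=
  ((((b : ℤ) - a) * ((c : ℤ) - a) * ((d : ℤ) - a) * ((c : ℤ) - b) * ((d : ℤ) - b)
      * ((d : ℤ) - c) : ℤ) : ℂ) / 12

/-- Complex-valued Minkowski metric. -/
noncomputable def etaC (i j : Fin 4) : ℂ := (eta i j : ℝ)

/-- The plane wave `u_ν(x) = w_ν e^{-i k·x}` with `k·x = k_μ x^μ`. -/
noncomputable def planeWave (w : Fin 4 → ℂ) (kv : Fin 4 → ℝ) (x : Fin 4 → ℝ)
    (n : Fin 4) : ℂ :=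
  w n * Complex.exp (-Complex.I * (∑ m, (kv m : ℂ) * (x m : ℂ)))

/-- The 2-form `du`: `(du)_{μν} = ∂_μ u_ν - ∂_ν u_μ`. -/
noncomputable def du (w : Fin 4 → ℂ) (kv : Fin 4 → ℝ) (x : Fin 4 → ℝ)
    (m n : Fin 4) : ℂ :=
  fderiv ℝ (fun y => planeWave w kv y n) x (Pi.single m 1)
    - fderiv ℝ (fun y => planeWave w kv y m) x (Pi.single n 1)

/-- Hodge star on complex 2-forms: `(*F)_{μν} = (1/2) F^{μ'ν'} ε_{μ'ν'μν}`. -/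
noncomputable def star2C (F : Fin 4 → Fin 4 → ℂ) : Fin 4 → Fin 4 → ℂ := fun m n =>
  (1 / 2) * ∑ a, ∑ b, (∑ a', ∑ b', etaC a a' * etaC b b' * F a' b') * epsC a b m n

/-- The torsion-wave curvature `R_{κλμν} = Re((du)_{κλ}(du)_{μν})`. -/
noncomputable def curv (w : Fin 4 → ℂ) (kv : Fin 4 → ℝ) (x : Fin 4 → ℝ)
    (k l m n : Fin 4) : ℝ :=
  (du w kv x k l * du w kv x m n).re

/-!
Differentiating the plane wave gives `du = -i e^{-ik·x} (k ∧ w)`, so self-duality of `du` is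
self-duality of the constant bivector `F = k ∧ w`. Written out, `*F = iF` yields the vector
identities `(k·k) w = (k·w) k` and, since `w ∧ k = -F` is self-dual as well, `(w·w) k = (k·w) w`.
Substituting the first into `(k·k)(k_m w_n - k_n w_m)` gives `(k·k) F = 0`, so `F ≠ 0` forces
`k·k = 0`; as `k ≠ 0` the identities then give `k·w = 0` and `w·w = 0`. The Ricci contraction
of `Re(F_{κλ} F_{μν})` is a combination of these three products, hence vanishes.
-/

open Complex (I)

def minkowskiDot {R : Type*} [CommRing R] (a b : Fin 4 → R) : R :=
  a 0 * b 0 - a 1 * b 1 - a 2 * b 2 - a 3 * b 3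

lemma minkowskiDot_comm {R : Type*} [CommRing R] (a b : Fin 4 → R) :
    minkowskiDot a b = minkowskiDot b a := by
  simp only [minkowskiDot]
  ring

lemma sum_eta_mul_mul (a b : Fin 4 → ℝ) :
    ∑ m, ∑ n, eta m n * a m * b n = minkowskiDot a b := by
  simp [Fin.sum_univ_four, eta, minkowskiDot]
  ring

lemma minkowskiDot_ofReal (a b : Fin 4 → ℝ) :
    minkowskiDot (fun j => (a j : ℂ)) (fun j => (b j : ℂ))
      = ((minkowskiDot a b : ℝ) : ℂ) := by
  simp only [minkowskiDot]
  push_cast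
  ring

def wedge (k w : Fin 4 → ℂ) (m n : Fin 4) : ℂ := k m * w n - k n * w m

lemma wedge_swap (k w : Fin 4 → ℂ) : wedge w k = -wedge k w := by
  ext m n
  simp only [wedge, Pi.neg_apply]
  ring

lemma sum_eta_mul_wedge_mul_wedge (k w : Fin 4 → ℂ) (l n : Fin 4) :
    ∑ b, ∑ a, (eta b a : ℂ) * (wedge k w a l * wedge k w b n)
      = minkowskiDot k k * (w l * w n) - minkowskiDot k w * (k l * w n + w l * k n)
        + minkowskiDot w w * (k l * k n) := by
  simp [Fin.sum_univ_four, eta, wedge, minkowskiDot]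
  ring

/-- The components `(0, j)` of `*F = iF`; for antisymmetric `F` they determine all the others. -/
def IsSelfDual (F : Fin 4 → Fin 4 → ℂ) : Prop :=
  F 2 3 = I * F 0 1 ∧ F 3 1 = I * F 0 2 ∧ F 1 2 = I * F 0 3

lemma IsSelfDual.smul {F : Fin 4 → Fin 4 → ℂ} (h : IsSelfDual F) (c : ℂ) :
    IsSelfDual (c • F) := by
  obtain ⟨h1, h2, h3⟩ := h
  simp only [IsSelfDual, Pi.smul_apply, smul_eq_mul]
  exact ⟨by rw [h1]; ring, by rw [h2]; ring, by rw [h3]; ring⟩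

lemma IsSelfDual.of_smul {F : Fin 4 → Fin 4 → ℂ} {c : ℂ} (hc : c ≠ 0)
    (h : IsSelfDual (c • F)) : IsSelfDual F := by
  simpa [smul_smul, inv_mul_cancel₀ hc] using h.smul c⁻¹

lemma IsSelfDual.neg {F : Fin 4 → Fin 4 → ℂ} (h : IsSelfDual F) : IsSelfDual (-F) := by
  simpa using h.smul (-1)

lemma star2C_apply_zero (F : Fin 4 → Fin 4 → ℂ) :
    star2C F 0 1 = (F 2 3 - F 3 2) / 2 ∧ star2C F 0 2 = (F 3 1 - F 1 3) / 2 ∧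
      star2C F 0 3 = (F 1 2 - F 2 1) / 2 := by
  refine ⟨?_, ?_, ?_⟩ <;> simp [star2C, Fin.sum_univ_four, epsC, etaC, eta] <;> ring

lemma isSelfDual_of_star2C_eq {F : Fin 4 → Fin 4 → ℂ} (hanti : ∀ m n, F n m = -F m n)
    (h : ∀ m n, star2C F m n = I * F m n) : IsSelfDual F := by
  obtain ⟨h1, h2, h3⟩ := star2C_apply_zero F
  refine ⟨?_, ?_, ?_⟩
  · linear_combination h 0 1 - h1 + hanti 2 3 / 2
  · linear_combination h 0 2 - h2 + hanti 3 1 / 2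
  · linear_combination h 0 3 - h3 + hanti 1 2 / 2

section SelfDualWedge

variable {k w : Fin 4 → ℂ}

theorem IsSelfDual.minkowskiDot_self_mul (h : IsSelfDual (wedge k w)) (j : Fin 4) :
    minkowskiDot k k * w j = minkowskiDot k w * k j := by
  obtain ⟨h1, h2, h3⟩ := h
  simp only [wedge] at h1 h2 h3
  fin_cases j <;> simp only [minkowskiDot] <;> dsimp
  · linear_combination I * k 1 * h1 + I * k 2 * h2 + I * k 3 * h3
      - (k 1 * k 1 * w 0 + k 2 * k 2 * w 0 + k 3 * k 3 * w 0
        - k 0 * k 1 * w 1 - k 0 * k 2 * w 2 - k 0 * k 3 * w 3) * Complex.I_sq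
  · linear_combination k 2 * h3 - k 3 * h2 + I * k 0 * h1
      + (k 0 * k 0 * w 1 - k 0 * k 1 * w 0) * Complex.I_sq
  · linear_combination k 3 * h1 - k 1 * h3 + I * k 0 * h2
      + (k 0 * k 0 * w 2 - k 0 * k 2 * w 0) * Complex.I_sq
  · linear_combination k 1 * h2 - k 2 * h1 + I * k 0 * h3
      + (k 0 * k 0 * w 3 - k 0 * k 3 * w 0) * Complex.I_sq

theorem IsSelfDual.minkowskiDot_eq_zero (h : IsSelfDual (wedge k w)) (hF : wedge k w ≠ 0) :
    minkowskiDot k k = 0 ∧ minkowskiDot k w = 0 ∧ minkowskiDot w w = 0 := by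
  have hk := h.minkowskiDot_self_mul
  have hw : ∀ j, minkowskiDot w w * k j = minkowskiDot k w * w j := by
    intro j
    rw [minkowskiDot_comm k w]
    exact (wedge_swap k w ▸ h.neg).minkowskiDot_self_mul j
  have hkk : minkowskiDot k k = 0 := by
    obtain ⟨m, n, hmn⟩ : ∃ m n, wedge k w m n ≠ 0 := by
      by_contra! hzero
      exact hF (funext₂ hzero)
    have : minkowskiDot k k * wedge k w m n = 0 := by
      simp only [wedge]
      linear_combination k m * hk n - k n * hk m
    exact (mul_eq_zero.mp this).resolve_right hmn
  obtain ⟨j, hj⟩ : ∃ j, k j ≠ 0 := by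
    by_contra! hzero
    exact hF (by ext m n; simp [wedge, hzero])
  have hkw : minkowskiDot k w = 0 := by
    have : minkowskiDot k w * k j = 0 := by rw [← hk j, hkk, zero_mul]
    exact (mul_eq_zero.mp this).resolve_right hj
  refine ⟨hkk, hkw, ?_⟩
  have : minkowskiDot w w * k j = 0 := by rw [hw j, hkw, zero_mul]
  exact (mul_eq_zero.mp this).resolve_right hj

end SelfDualWedge

lemma fderiv_planeWave_apply_single (w : Fin 4 → ℂ) (kv x : Fin 4 → ℝ) (m n : Fin 4) :
    fderiv ℝ (fun y => planeWave w kv y n) x (Pi.single m 1)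
      = -I * kv m * planeWave w kv x n := by
  have hphase : HasFDerivAt (fun y : Fin 4 → ℝ => ∑ j, (kv j : ℂ) * (y j : ℂ))
      (∑ j, (kv j : ℂ) • (Complex.ofRealCLM.comp (ContinuousLinearMap.proj j))) x :=
    HasFDerivAt.fun_sum fun j _ => (Complex.ofRealCLM.comp
      (ContinuousLinearMap.proj (R := ℝ) (φ := fun _ : Fin 4 => ℝ) j)).hasFDerivAt.const_mul _
  rw [show (fun y => planeWave w kv y n)
      = fun y => w n * Complex.exp (-I * ∑ j, (kv j : ℂ) * (y j : ℂ)) from rfl,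
    ((hphase.const_mul (-I)).cexp.const_mul (w n)).fderiv]
  simp [Pi.single_apply, planeWave, apply_ite (fun r : ℝ => (r : ℂ))]
  ring

lemma du_eq_smul_wedge (w : Fin 4 → ℂ) (kv x : Fin 4 → ℝ) :
    du w kv x = (-I * Complex.exp (-I * ∑ j, (kv j : ℂ) * (x j : ℂ))) •
      wedge (fun j => (kv j : ℂ)) w := by
  ext m n
  rw [du, fderiv_planeWave_apply_single, fderiv_planeWave_apply_single]
  simp only [planeWave, wedge, Pi.smul_apply, smul_eq_mul]
  ring

lemma du_swap (w : Fin 4 → ℂ) (kv x : Fin 4 → ℝ) (m n : Fin 4) :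
    du w kv x n m = -du w kv x m n :=
  (neg_sub _ _).symm

lemma sum_eta_mul_curv (w : Fin 4 → ℂ) (kv x : Fin 4 → ℝ) (l n : Fin 4) :
    ∑ k, ∑ a, eta k a * curv w kv x a l k n
      = ((-I * Complex.exp (-I * ∑ j, (kv j : ℂ) * (x j : ℂ))) ^ 2 *
          ∑ b, ∑ a, (eta b a : ℂ) * (wedge (fun j => (kv j : ℂ)) w a l
            * wedge (fun j => (kv j : ℂ)) w b n)).re := by
  simp only [curv, du_eq_smul_wedge, Pi.smul_apply, smul_eq_mul, Finset.mul_sum, Complex.re_sum]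
  refine Finset.sum_congr rfl fun b _ => Finset.sum_congr rfl fun a _ => ?_
  rw [← Complex.re_ofReal_mul]
  ring_nf

/-- for a plane wave `u(x) = w e^{-ik·x}` with self-dual `du`
(`*du = i du`) and `du ≠ 0`, the wave covector `k` is null, and the curvature
`R_{κλμν} = Re((du)_{κλ}(du)_{μν})` is Ricci flat: `R^κ{}_{λκν} = 0`. -/
theorem statement19 (w : Fin 4 → ℂ) (kv : Fin 4 → ℝ)
    (hsd : ∀ x m n, star2C (du w kv x) m n = Complex.I * du w kv x m n)
    (hne : ¬ ∀ x m n, du w kv x m n = 0) :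
    (∑ m, ∑ n, eta m n * kv m * kv n = 0) ∧
    (∀ x l n, (∑ k, ∑ a, eta k a * curv w kv x a l k n) = 0) := by
  have hphase : -I * Complex.exp (-I * ∑ j, (kv j : ℂ) * ((0 : Fin 4 → ℝ) j : ℂ)) ≠ 0 := by
    simp
  have hsdF : IsSelfDual (wedge (fun j => (kv j : ℂ)) w) := by
    refine IsSelfDual.of_smul hphase ?_
    rw [← du_eq_smul_wedge]
    exact isSelfDual_of_star2C_eq (du_swap w kv 0) (hsd 0)
  have hF : wedge (fun j => (kv j : ℂ)) w ≠ 0 := by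
    intro hzero
    exact hne fun x m n => by simp [du_eq_smul_wedge, hzero]
  obtain ⟨hkk, hkw, hww⟩ := hsdF.minkowskiDot_eq_zero hF
  refine ⟨?_, fun x l n => ?_⟩
  · rw [sum_eta_mul_mul]
    exact_mod_cast (minkowskiDot_ofReal kv kv).symm.trans hkk
  · rw [sum_eta_mul_curv, sum_eta_mul_wedge_mul_wedge, hkk, hkw, hww]
    simp
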